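/- arXiv:1902.10619 — 2 statements merged into one kernel-verified Lean document; each statement's English description precedes it below -/
import Mathlib

section
/- If a finite MDP has a proper policy π (one that from every state eventually reaches a terminal state with probability 1), then any ε-greedy policy with ε > 0 (which in every state takes each action in A with probability at least ε/|A|) is also proper. -/
open Filter Topology

/-- Probability of NOT having reached a terminal state in `Se` within `n` steps,
starting from `s`, when following the stochastic policy `π` in the MDP with
transition function `P`. -/
noncomputable def notHit {S A : Type*} [Fintype S] [Fintype A] [DecidableEq S]
    (P : S → A → S → ℝ) (π : S → A → ℝ) (Se : Finset S) : ℕ → S → ℝ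
  | 0, s => if s ∈ Se then 0 else 1
  | n + 1, s =>
      if s ∈ Se then 0
      else ∑ a, ∑ s', π s a * P s a s' * notHit P π Se n s'

/-- A stochastic policy is proper if from every state it eventually reaches a
terminal state with probability 1. -/
def IsProper {S A : Type*} [Fintype S] [Fintype A] [DecidableEq S]
    (P : S → A → S → ℝ) (π : S → A → ℝ) (Se : Finset S) : Prop :=
  ∀ s, Tendsto (fun n => notHit P π Se n s) atTop (𝓝 0)

section Aux
variable {S A : Type*} [Fintype S] [Fintype A] [DecidableEq S]
  {P : S → A → S → ℝ} {π : S → A → ℝ} {Se : Finset S}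

lemma notHit_zero (s : S) : notHit P π Se 0 s = if s ∈ Se then 0 else 1 := by
  simp [notHit]

lemma notHit_succ (n : ℕ) (s : S) : notHit P π Se (n+1) s =
    if s ∈ Se then 0 else ∑ a, ∑ s', π s a * P s a s' * notHit P π Se n s' := by
  simp [notHit]

lemma notHit_nonneg (hPnn : ∀ s a s', 0 ≤ P s a s') (hπnn : ∀ s a, 0 ≤ π s a) :
    ∀ n s, 0 ≤ notHit P π Se n s := by
  intro n
  induction n with
  | zero => intro s; rw [notHit_zero]; split <;> norm_num
  | succ n ih =>
      intro s; rw [notHit_succ]; split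
      · exact le_rfl
      · refine Finset.sum_nonneg fun a _ => Finset.sum_nonneg fun s' _ => ?_
        exact mul_nonneg (mul_nonneg (hπnn s a) (hPnn s a s')) (ih s')

omit [DecidableEq S] in
lemma sum_kernel (hPsum : ∀ s a, ∑ s', P s a s' = 1) (hπsum : ∀ s, ∑ a, π s a = 1) (s : S) :
    ∑ a, ∑ s', π s a * P s a s' = 1 := by
  have : ∀ a : A, ∑ s', π s a * P s a s' = π s a := by
    intro a; rw [← Finset.mul_sum, hPsum s a, mul_one]
  simp [this, hπsum s]

lemma notHit_le_one (hPnn : ∀ s a s', 0 ≤ P s a s') (hπnn : ∀ s a, 0 ≤ π s a)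
    (hPsum : ∀ s a, ∑ s', P s a s' = 1) (hπsum : ∀ s, ∑ a, π s a = 1) :
    ∀ n s, notHit P π Se n s ≤ 1 := by
  intro n
  induction n with
  | zero => intro s; rw [notHit_zero]; split <;> norm_num
  | succ n ih =>
      intro s; rw [notHit_succ]; split
      · norm_num
      · calc ∑ a, ∑ s', π s a * P s a s' * notHit P π Se n s'
            ≤ ∑ a, ∑ s', π s a * P s a s' * 1 := by
              refine Finset.sum_le_sum fun a _ => Finset.sum_le_sum fun s' _ => ?_
              exact mul_le_mul_of_nonneg_left (ih s') (mul_nonneg (hπnn s a) (hPnn s a s'))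
          _ = 1 := by simp [sum_kernel hPsum hπsum s]

lemma notHit_anti (hPnn : ∀ s a s', 0 ≤ P s a s') (hπnn : ∀ s a, 0 ≤ π s a)
    (hPsum : ∀ s a, ∑ s', P s a s' = 1) (hπsum : ∀ s, ∑ a, π s a = 1) (s : S) :
    Antitone (fun n => notHit P π Se n s) := by
  have key : ∀ n s, notHit P π Se (n+1) s ≤ notHit P π Se n s := by
    intro n
    induction n with
    | zero =>
        intro s; rw [notHit_succ, notHit_zero]; split
        · exact le_rfl
        · rename_i h
          have h1 := notHit_le_one (Se := Se) hPnn hπnn hPsum hπsum 1 s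
          rwa [notHit_succ, if_neg h] at h1
    | succ n ih =>
        intro s; rw [notHit_succ, notHit_succ]; split
        · exact le_rfl
        · refine Finset.sum_le_sum fun a _ => Finset.sum_le_sum fun s' _ => ?_
          exact mul_le_mul_of_nonneg_left (ih s') (mul_nonneg (hπnn s a) (hPnn s a s'))
  exact antitone_nat_of_succ_le fun n => key n s

end Aux

section Aux2
variable {S A : Type*} [Fintype S] [Fintype A] [DecidableEq S]
  {P : S → A → S → ℝ} {π πe : S → A → ℝ} {Se : Finset S}

lemma notHit_mem {n : ℕ} {s : S} (h : s ∈ Se) : notHit P π Se n s = 0 := by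
  cases n <;> simp [notHit_zero, notHit_succ, h]

lemma notHit_submul (hPnn : ∀ s a s', 0 ≤ P s a s') (hπnn : ∀ s a, 0 ≤ π s a)
    {m : ℕ} {M : ℝ} (hM0 : 0 ≤ M) (hM : ∀ s', notHit P π Se m s' ≤ M) :
    ∀ n s, notHit P π Se (n + m) s ≤ notHit P π Se n s * M := by
  intro n
  induction n with
  | zero =>
      intro s; rw [zero_add, notHit_zero]; split
      · rename_i h; rw [notHit_mem h, zero_mul]
      · rw [one_mul]; exact hM s
  | succ n ih =>
      intro s
      have hrw : n + 1 + m = (n + m) + 1 := by omega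
      rw [hrw, notHit_succ, notHit_succ]; split
      · rw [zero_mul]
      · calc ∑ a, ∑ s', π s a * P s a s' * notHit P π Se (n + m) s'
            ≤ ∑ a, ∑ s', π s a * P s a s' * (notHit P π Se n s' * M) := by
              refine Finset.sum_le_sum fun a _ => Finset.sum_le_sum fun s' _ => ?_
              exact mul_le_mul_of_nonneg_left (ih s') (mul_nonneg (hπnn s a) (hPnn s a s'))
          _ = (∑ a, ∑ s', π s a * P s a s' * notHit P π Se n s') * M := by
              rw [Finset.sum_mul]
              refine Finset.sum_congr rfl fun a _ => ?_
              rw [Finset.sum_mul]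
              exact Finset.sum_congr rfl fun s' _ => by ring

lemma hit_bound (hPnn : ∀ s a s', 0 ≤ P s a s') (hPsum : ∀ s a, ∑ s', P s a s' = 1)
    (hπnn : ∀ s a, 0 ≤ π s a) (hπsum : ∀ s, ∑ a, π s a = 1)
    (hπenn : ∀ s a, 0 ≤ πe s a) (hπesum : ∀ s, ∑ a, πe s a = 1)
    {c : ℝ} (hc0 : 0 ≤ c) (hc1 : c ≤ 1) (hce : ∀ s a, c * π s a ≤ πe s a) :
    ∀ n s, c ^ n * (1 - notHit P π Se n s) ≤ 1 - notHit P πe Se n s := by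
  intro n
  induction n with
  | zero =>
      intro s; rw [notHit_zero, notHit_zero]; split <;> norm_num
  | succ n ih =>
      intro s
      rw [notHit_succ, notHit_succ]
      split
      · simpa using pow_le_one₀ hc0 hc1 (n := n + 1)
      · have e1 : 1 - ∑ a, ∑ s', π s a * P s a s' * notHit P π Se n s'
            = ∑ a, ∑ s', π s a * P s a s' * (1 - notHit P π Se n s') := by
          have hk := sum_kernel (π := π) hPsum hπsum s
          simp only [mul_sub, mul_one, Finset.sum_sub_distrib, hk]
        have e2 : 1 - ∑ a, ∑ s', πe s a * P s a s' * notHit P πe Se n s'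
            = ∑ a, ∑ s', πe s a * P s a s' * (1 - notHit P πe Se n s') := by
          have hk := sum_kernel (π := πe) hPsum hπesum s
          simp only [mul_sub, mul_one, Finset.sum_sub_distrib, hk]
        rw [e1, e2]
        calc c ^ (n + 1) * ∑ a, ∑ s', π s a * P s a s' * (1 - notHit P π Se n s')
            = ∑ a, ∑ s', (c * π s a) * P s a s' * (c ^ n * (1 - notHit P π Se n s')) := by
              rw [Finset.mul_sum]
              refine Finset.sum_congr rfl fun a _ => ?_
              rw [Finset.mul_sum]
              exact Finset.sum_congr rfl fun s' _ => by ring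
          _ ≤ ∑ a, ∑ s', πe s a * P s a s' * (1 - notHit P πe Se n s') := by
              refine Finset.sum_le_sum fun a _ => Finset.sum_le_sum fun s' _ => ?_
              have h1 : (c * π s a) * P s a s' ≤ πe s a * P s a s' :=
                mul_le_mul_of_nonneg_right (hce s a) (hPnn s a s')
              have h2 : c ^ n * (1 - notHit P π Se n s') ≤ 1 - notHit P πe Se n s' := ih s'
              have h3 : 0 ≤ c ^ n * (1 - notHit P π Se n s') := by
                have := notHit_le_one (Se := Se) hPnn hπnn hPsum hπsum n s'
                have := pow_nonneg hc0 n
                nlinarith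
              have h4 : 0 ≤ (c * π s a) * P s a s' :=
                mul_nonneg (mul_nonneg hc0 (hπnn s a)) (hPnn s a s')
              exact mul_le_mul h1 h2 h3 (le_trans h4 h1)

end Aux2


/-- If a finite MDP has a proper policy, then any ε-greedy policy (ε > 0) is
also proper. -/
theorem eps_greedy_proper {S A : Type*} [Fintype S] [Fintype A] [Nonempty A] [DecidableEq S]
    (P : S → A → S → ℝ)
    (hPnn : ∀ s a s', 0 ≤ P s a s') (hPsum : ∀ s a, ∑ s', P s a s' = 1)
    (Se : Finset S)
    (π : S → A → ℝ)
    (hπnn : ∀ s a, 0 ≤ π s a) (hπsum : ∀ s, ∑ a, π s a = 1)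
    (hproper : IsProper P π Se)
    (ε : ℝ) (hε : 0 < ε)
    (πe : S → A → ℝ)
    (hπenn : ∀ s a, 0 ≤ πe s a) (hπesum : ∀ s, ∑ a, πe s a = 1)
    (hgreedy : ∀ s a, ε / (Fintype.card A : ℝ) ≤ πe s a) :
    IsProper P πe Se := by
  cases isEmpty_or_nonempty S with
  | inl hS => intro s; exact isEmptyElim s
  | inr hS =>
    set c : ℝ := ε / (Fintype.card A : ℝ) with hc
    have hcard : (0:ℝ) < (Fintype.card A : ℝ) := by
      exact_mod_cast Fintype.card_pos
    have hc0 : 0 < c := div_pos hε hcard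
    have hπe_le_one : ∀ s a, πe s a ≤ 1 := by
      intro s a
      have h := Finset.single_le_sum (f := fun a => πe s a)
        (fun a _ => hπenn s a) (Finset.mem_univ a)
      rw [hπesum s] at h; exact h
    have hπ_le_one : ∀ s a, π s a ≤ 1 := by
      intro s a
      have h := Finset.single_le_sum (f := fun a => π s a)
        (fun a _ => hπnn s a) (Finset.mem_univ a)
      rw [hπsum s] at h; exact h
    have hc1 : c ≤ 1 := by
      have s0 := Classical.arbitrary S
      have a0 := Classical.arbitrary A
      exact (hgreedy s0 a0).trans (hπe_le_one s0 a0)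
    have hce : ∀ s a, c * π s a ≤ πe s a := by
      intro s a
      calc c * π s a ≤ c * 1 := mul_le_mul_of_nonneg_left (hπ_le_one s a) hc0.le
        _ = c := mul_one c
        _ ≤ πe s a := hgreedy s a
    -- get a uniform N
    have hev : ∀ᶠ n in atTop, ∀ s : S, notHit P π Se n s < 1/2 :=
      eventually_all.2 fun s => (hproper s).eventually_lt_const (by norm_num)
    obtain ⟨N, hN⟩ := ((eventually_ge_atTop 1).and hev).exists
    obtain ⟨hN1, hNhalf⟩ := hN
    set q : ℝ := 1 - c ^ N / 2 with hqdef
    have hcN : 0 < c ^ N := pow_pos hc0 N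
    have hcN1 : c ^ N ≤ 1 := pow_le_one₀ hc0.le hc1
    have hq0 : 0 ≤ q := by rw [hqdef]; linarith
    have hq1 : q < 1 := by rw [hqdef]; linarith
    have hqe : ∀ s, notHit P πe Se N s ≤ q := by
      intro s
      have hb := hit_bound (Se := Se) hPnn hPsum hπnn hπsum hπenn hπesum hc0.le hc1 hce N s
      have hh := hNhalf s
      have hmul : c ^ N * (1/2) ≤ c ^ N * (1 - notHit P π Se N s) :=
        mul_le_mul_of_nonneg_left (by linarith) hcN.le
      rw [hqdef]
      linarith
    have hpow : ∀ k, ∀ s, notHit P πe Se (N * k) s ≤ q ^ k := by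
      intro k
      induction k with
      | zero =>
          intro s
          simpa using notHit_le_one (Se := Se) hPnn hπenn hPsum hπesum 0 s
      | succ k ih =>
          intro s
          have hrw : N * (k + 1) = N + N * k := by ring
          rw [hrw]
          calc notHit P πe Se (N + N * k) s
              ≤ notHit P πe Se N s * q ^ k :=
                notHit_submul hPnn hπenn (pow_nonneg hq0 k) (fun s' => ih s') N s
            _ ≤ q * q ^ k := mul_le_mul_of_nonneg_right (hqe s) (pow_nonneg hq0 k)
            _ = q ^ (k + 1) := by rw [pow_succ]; ring
    intro s
    have hNpos : 0 < N := hN1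
    refine squeeze_zero (g := fun n => q ^ (n / N)) (fun n => notHit_nonneg hPnn hπenn n s) (fun n => ?_) ?_
    · calc notHit P πe Se n s ≤ notHit P πe Se (N * (n / N)) s := by
            refine notHit_anti hPnn hπenn hPsum hπesum s ?_
            rw [mul_comm]; exact Nat.div_mul_le_self n N
        _ ≤ q ^ (n / N) := hpow _ s
    · have hdiv : Tendsto (fun n : ℕ => n / N) atTop atTop := by
        refine tendsto_atTop_atTop.2 fun b => ⟨N * b, fun n hn => ?_⟩
        exact (Nat.le_div_iff_mul_le hNpos).2 (by rwa [mul_comm] at hn)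
      exact (tendsto_pow_atTop_nhds_zero_of_lt_one hq0 hq1).comp hdiv
end

section
/- In a finite MDP with a proper policy, under any ε-greedy policy with ε > 0, the expected number of steps to reach a terminal state from any state is finite. -/
/-!
A policy `π` turns the MDP into a Markov chain on `S` with kernel `K_π s s' = ∑ a, π s a * P s a s'`.
An ε-greedy policy `πe` dominates `δ • π` for `δ = ε / |A|`, so `K_πe ≥ δ K_π` and the probability
that `πe` is absorbed in `Se` within `N` steps is at least `δ ^ N` times that of `π`. As `π` is
proper and `S` is finite, some `N` makes the probability of not being absorbed by time `N` less
than `1` from every state, hence at most some `c < 1` for `πe`. By the Markov property `πe`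
survives `kN` steps with probability at most `c ^ k`, so these probabilities are summable.
-/

open Filter Topology

open Finset

lemma summable_pow_div_of_lt_one {c : ℝ} (hc₀ : 0 ≤ c) (hc₁ : c < 1) {N : ℕ} (hN : 0 < N) :
    Summable fun n : ℕ => c ^ (n / N) := by
  have : NeZero N := ⟨hN.ne'⟩
  have hprod : Summable fun p : ℕ × Fin N => c ^ p.1 := by
    refine (summable_prod_of_nonneg fun p => pow_nonneg hc₀ _).mpr ⟨fun _ => .of_finite, ?_⟩
    simpa using (summable_geometric_of_lt_one hc₀ hc₁).mul_left (N : ℝ)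
  exact hprod.comp_injective (Nat.divModEquiv N).injective

/-- Probability that the Markov chain with kernel `K` started at `s` has not entered `Se`
by time `n`. -/
noncomputable def survival {S : Type*} [Fintype S] [DecidableEq S]
    (K : S → S → ℝ) (Se : Finset S) : ℕ → S → ℝ
  | 0, s => if s ∈ Se then 0 else 1
  | n + 1, s => if s ∈ Se then 0 else ∑ s', K s s' * survival K Se n s'

section survival

variable {S : Type*} [Fintype S] [DecidableEq S] {K K' : S → S → ℝ} {Se : Finset S}

lemma survival_of_mem {s : S} (hs : s ∈ Se) (n : ℕ) : survival K Se n s = 0 := by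
  cases n <;> simp [survival, hs]

lemma survival_succ_of_notMem {s : S} (hs : s ∉ Se) (n : ℕ) :
    survival K Se (n + 1) s = ∑ s', K s s' * survival K Se n s' := by
  simp [survival, hs]

lemma one_sub_survival_succ_of_notMem (hK₁ : ∀ s, ∑ s', K s s' = 1) {s : S} (hs : s ∉ Se)
    (n : ℕ) : 1 - survival K Se (n + 1) s = ∑ s', K s s' * (1 - survival K Se n s') := by
  simp only [survival_succ_of_notMem hs, mul_sub, mul_one, sum_sub_distrib, hK₁]

lemma survival_nonneg (hK₀ : ∀ s s', 0 ≤ K s s') (n : ℕ) (s : S) :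
    0 ≤ survival K Se n s := by
  induction n generalizing s with
  | zero => unfold survival; split_ifs <;> norm_num
  | succ n ih =>
    by_cases hs : s ∈ Se
    · rw [survival_of_mem hs]
    · rw [survival_succ_of_notMem hs]
      exact sum_nonneg fun s' _ => mul_nonneg (hK₀ s s') (ih s')

lemma survival_le_one (hK₀ : ∀ s s', 0 ≤ K s s') (hK₁ : ∀ s, ∑ s', K s s' = 1) (n : ℕ)
    (s : S) : survival K Se n s ≤ 1 := by
  induction n generalizing s with
  | zero => unfold survival; split_ifs <;> norm_num
  | succ n ih =>
    by_cases hs : s ∈ Se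
    · simp [survival_of_mem hs]
    · rw [survival_succ_of_notMem hs, ← hK₁ s]
      exact sum_le_sum fun s' _ => mul_le_of_le_one_right (hK₀ s s') (ih s')

/-- The Markov property at time `n`. -/
lemma survival_add_le (hK₀ : ∀ s s', 0 ≤ K s s') {m : ℕ} {c : ℝ}
    (hm : ∀ s, survival K Se m s ≤ c) (n : ℕ) (s : S) :
    survival K Se (n + m) s ≤ c * survival K Se n s := by
  induction n generalizing s with
  | zero =>
    by_cases hs : s ∈ Se
    · simp [survival_of_mem hs]
    · simpa [survival, hs] using hm s
  | succ n ih =>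
    by_cases hs : s ∈ Se
    · simp [survival_of_mem hs]
    · rw [Nat.add_right_comm, survival_succ_of_notMem hs, survival_succ_of_notMem hs, mul_sum]
      refine sum_le_sum fun s' _ => ?_
      calc K s s' * survival K Se (n + m) s'
          ≤ K s s' * (c * survival K Se n s') := mul_le_mul_of_nonneg_left (ih s') (hK₀ s s')
        _ = c * (K s s' * survival K Se n s') := mul_left_comm _ _ _

lemma survival_antitone (hK₀ : ∀ s s', 0 ≤ K s s') (hK₁ : ∀ s, ∑ s', K s s' = 1) (s : S) :
    Antitone fun n => survival K Se n s :=
  antitone_nat_of_succ_le fun n =>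
    (survival_add_le hK₀ (survival_le_one hK₀ hK₁ 1) n s).trans_eq (one_mul _)

lemma survival_mul_le_pow (hK₀ : ∀ s s', 0 ≤ K s s') {m : ℕ} {c : ℝ} (hc : 0 ≤ c)
    (hm : ∀ s, survival K Se m s ≤ c) (k : ℕ) (s : S) :
    survival K Se (k * m) s ≤ c ^ k := by
  induction k generalizing s with
  | zero => simp only [zero_mul, pow_zero, survival]; split_ifs <;> norm_num
  | succ k ih =>
    calc survival K Se ((k + 1) * m) s = survival K Se (k * m + m) s := by rw [Nat.succ_mul]
      _ ≤ c * survival K Se (k * m) s := survival_add_le hK₀ hm _ s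
      _ ≤ c * c ^ k := mul_le_mul_of_nonneg_left (ih s) hc
      _ = c ^ (k + 1) := (pow_succ' c k).symm

lemma summable_survival (hK₀ : ∀ s s', 0 ≤ K s s') (hK₁ : ∀ s, ∑ s', K s s' = 1) {m : ℕ}
    (hm : ∀ s, survival K Se m s < 1) (s : S) : Summable fun n => survival K Se n s := by
  set c := univ.sup' ⟨s, mem_univ s⟩ fun t => survival K Se (m + 1) t
  have hle : ∀ t, survival K Se (m + 1) t ≤ c := fun t => le_sup' _ (mem_univ t)
  have hc₀ : 0 ≤ c := (survival_nonneg hK₀ _ s).trans (hle s)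
  have hc₁ : c < 1 := (sup'_lt_iff _).2 fun t _ =>
    (survival_antitone hK₀ hK₁ t m.le_succ).trans_lt (hm t)
  refine .of_nonneg_of_le (fun n => survival_nonneg hK₀ n s) (fun n => ?_)
    (summable_pow_div_of_lt_one hc₀ hc₁ m.succ_pos)
  exact (survival_antitone hK₀ hK₁ s (Nat.div_mul_le_self n (m + 1))).trans
    (survival_mul_le_pow hK₀ hc₀ hle _ s)

lemma pow_mul_one_sub_survival_le (hK₀ : ∀ s s', 0 ≤ K s s') (hK₁ : ∀ s, ∑ s', K s s' = 1)
    (hK'₀ : ∀ s s', 0 ≤ K' s s') (hK'₁ : ∀ s, ∑ s', K' s s' = 1) {δ : ℝ} (hδ : 0 ≤ δ)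
    (hle : ∀ s s', δ * K s s' ≤ K' s s') (n : ℕ) (s : S) :
    δ ^ n * (1 - survival K Se n s) ≤ 1 - survival K' Se n s := by
  induction n generalizing s with
  | zero => simp [survival]
  | succ n ih =>
    by_cases hs : s ∈ Se
    · have hδ₁ : δ ≤ 1 := calc
        δ = ∑ s', δ * K s s' := by rw [← mul_sum, hK₁, mul_one]
        _ ≤ ∑ s', K' s s' := sum_le_sum fun s' _ => hle s s'
        _ = 1 := hK'₁ s
      simpa [survival_of_mem hs] using pow_le_one₀ hδ hδ₁
    · rw [one_sub_survival_succ_of_notMem hK₁ hs, one_sub_survival_succ_of_notMem hK'₁ hs,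
        mul_sum]
      refine sum_le_sum fun s' _ => ?_
      have hsurv : 0 ≤ δ ^ n * (1 - survival K Se n s') :=
        mul_nonneg (pow_nonneg hδ n) (sub_nonneg.2 (survival_le_one hK₀ hK₁ n s'))
      calc δ ^ (n + 1) * (K s s' * (1 - survival K Se n s'))
          = δ * K s s' * (δ ^ n * (1 - survival K Se n s')) := by ring
        _ ≤ K' s s' * (1 - survival K' Se n s') :=
          mul_le_mul (hle s s') (ih s') hsurv (hK'₀ s s')

lemma survival_lt_one_of_le (hK₀ : ∀ s s', 0 ≤ K s s') (hK₁ : ∀ s, ∑ s', K s s' = 1)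
    (hK'₀ : ∀ s s', 0 ≤ K' s s') (hK'₁ : ∀ s, ∑ s', K' s s' = 1) {δ : ℝ} (hδ : 0 < δ)
    (hle : ∀ s s', δ * K s s' ≤ K' s s') {n : ℕ} {s : S} (h : survival K Se n s < 1) :
    survival K' Se n s < 1 := by
  have hpos : 0 < δ ^ n * (1 - survival K Se n s) := mul_pos (pow_pos hδ n) (sub_pos.2 h)
  linarith [pow_mul_one_sub_survival_le (Se := Se) hK₀ hK₁ hK'₀ hK'₁ hδ.le hle n s]

end survival

def policyKernel {S A : Type*} [Fintype A] (P : S → A → S → ℝ) (π : S → A → ℝ) (s s' : S) : ℝ :=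
  ∑ a, π s a * P s a s'

section policyKernel

variable {S A : Type*} [Fintype A] {P : S → A → S → ℝ} {π π' : S → A → ℝ}

lemma policyKernel_nonneg (hP : ∀ s a s', 0 ≤ P s a s') (hπ : ∀ s a, 0 ≤ π s a) (s s' : S) :
    0 ≤ policyKernel P π s s' :=
  sum_nonneg fun a _ => mul_nonneg (hπ s a) (hP s a s')

lemma sum_policyKernel [Fintype S] (hP : ∀ s a, ∑ s', P s a s' = 1) (hπ : ∀ s, ∑ a, π s a = 1)
    (s : S) :
    ∑ s', policyKernel P π s s' = 1 := by
  simp only [policyKernel]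
  rw [sum_comm]
  simp only [← mul_sum, hP, mul_one, hπ]

lemma mul_policyKernel_le (hP : ∀ s a s', 0 ≤ P s a s') {δ : ℝ}
    (h : ∀ s a, δ * π s a ≤ π' s a) (s s' : S) :
    δ * policyKernel P π s s' ≤ policyKernel P π' s s' := by
  rw [policyKernel, mul_sum]
  exact sum_le_sum fun a _ => by
    rw [← mul_assoc]
    exact mul_le_mul_of_nonneg_right (h s a) (hP s a s')

lemma notHit_eq_survival [Fintype S] [DecidableEq S] (Se : Finset S) :
    notHit P π Se = survival (policyKernel P π) Se := by
  funext n s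
  induction n generalizing s with
  | zero => rfl
  | succ n ih =>
    simp only [notHit, survival, policyKernel, ih, sum_mul]
    rw [sum_comm]

end policyKernel

/-- If a finite MDP has a proper policy, then any ε-greedy policy (ε > 0) is
also proper. -/
theorem eps_greedy_finite_expected_hitting_time {S A : Type*} [Fintype S] [Fintype A] [Nonempty A] [DecidableEq S]
    (P : S → A → S → ℝ)
    (hPnn : ∀ s a s', 0 ≤ P s a s') (hPsum : ∀ s a, ∑ s', P s a s' = 1)
    (Se : Finset S)
    (π : S → A → ℝ)
    (hπnn : ∀ s a, 0 ≤ π s a) (hπsum : ∀ s, ∑ a, π s a = 1)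
    (hproper : IsProper P π Se)
    (ε : ℝ) (hε : 0 < ε)
    (πe : S → A → ℝ)
    (hπenn : ∀ s a, 0 ≤ πe s a) (hπesum : ∀ s, ∑ a, πe s a = 1)
    (hgreedy : ∀ s a, ε / (Fintype.card A : ℝ) ≤ πe s a) :
    ∀ s, Summable (fun n => notHit P πe Se n s) := by
  have hδ : 0 < ε / (Fintype.card A : ℝ) := div_pos hε (Nat.cast_pos.2 Fintype.card_pos)
  have hdom : ∀ s a, ε / (Fintype.card A : ℝ) * π s a ≤ πe s a := fun s a =>
    (mul_le_of_le_one_right hδ.le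
      (hπsum s ▸ single_le_sum (fun a _ => hπnn s a) (mem_univ a))).trans (hgreedy s a)
  obtain ⟨N, hN⟩ : ∃ N, ∀ s, notHit P π Se N s < 1 :=
    (eventually_all.2 fun s => (hproper s).eventually (gt_mem_nhds one_pos)).exists
  rw [notHit_eq_survival] at hN ⊢
  exact summable_survival (policyKernel_nonneg hPnn hπenn) (sum_policyKernel hPsum hπesum)
    fun s => survival_lt_one_of_le (policyKernel_nonneg hPnn hπnn) (sum_policyKernel hPsum hπsum)
      (policyKernel_nonneg hPnn hπenn) (sum_policyKernel hPsum hπesum) hδ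
      (mul_policyKernel_le hPnn hdom) (hN s)
end
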